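/- Assume that for all x, y ≥ 2 we have π(x + y) ≤ π(x) + π(y), and moreover that for every prime p and every x with 2 ≤ x ≤ p - 2, π(p - 1) ≠ π(x) + π(p - x). Then for all a, b ≥ 2, p_{a+b} > p_a + p_b. -/

import Mathlib

/-!
If `p_{a+b} ≤ p_a + p_b`, apply the subadditivity of `π` to `p_a` and `p_{a+b} - p_a`: counting
primes gives `π (p_{a+b} - p_a) ≥ b`, so `p_{a+b} - p_a ≥ p_b` and equality holds. But for
`a, b ≥ 2` both `p_a` and `p_b` are odd, so their sum is even and larger than `2`, hence not prime.
-/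

open Nat

open scoped Nat.Prime

lemma primeCounting_nth_prime (n : ℕ) : π (nth Nat.Prime n) = n + 1 :=
  count_nth_succ_of_infinite infinite_setOfPred_prime n

lemma nth_prime_le_iff_lt_primeCounting {n m : ℕ} : nth Nat.Prime n ≤ m ↔ n < π m := by
  rw [primeCounting, primeCounting', ← not_le, count_le_iff_le_nth infinite_setOfPred_prime, not_le,
    Nat.lt_succ_iff]

lemma nth_prime_ne_two {n : ℕ} (hn : n ≠ 0) : nth Nat.Prime n ≠ 2 := by
  rw [← nth_prime_zero_eq_two]
  exact (nth_injective infinite_setOfPred_prime).ne hn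

lemma not_prime_add_of_ne_two {p q : ℕ} (hp : p.Prime) (hq : q.Prime) (hp2 : p ≠ 2) (hq2 : q ≠ 2) :
    ¬ (p + q).Prime := fun hpq ↦ by
  have heven : Even (p + q) := (hp.odd_of_ne_two hp2).add_odd (hq.odd_of_ne_two hq2)
  linarith [hp.two_le, hq.two_le, hpq.even_iff.1 heven]

theorem nth_prime_add_le_of_primeCounting_subadditive
    (h : ∀ x y : ℕ, 2 ≤ x → 2 ≤ y → π (x + y) ≤ π x + π y) (i : ℕ) {j : ℕ} (hj : 1 ≤ j) :
    nth Nat.Prime i + nth Nat.Prime j ≤ nth Nat.Prime (i + j + 1) := by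
  set p := nth Nat.Prime (i + j + 1)
  set x := nth Nat.Prime i
  have hmono := nth_strictMono infinite_setOfPred_prime
  have hxp : x + 2 ≤ p := by
    calc x + 2 ≤ nth Nat.Prime (i + 2) := by simpa [add_comm] using hmono.add_le_nat 2 i
      _ ≤ p := hmono.monotone (by omega)
  have hcount : π p ≤ π x + π (p - x) := by
    simpa [Nat.add_sub_cancel' (show x ≤ p by omega)] using
      h x (p - x) (prime_nth_prime i).two_le (by omega)
  rw [primeCounting_nth_prime, primeCounting_nth_prime] at hcount
  have hjp : nth Nat.Prime j ≤ p - x := nth_prime_le_iff_lt_primeCounting.2 (by omega)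
  omega

theorem stmt8_general
    (h : ∀ x y : ℕ, 2 ≤ x → 2 ≤ y →
      Nat.primeCounting (x + y) ≤ Nat.primeCounting x + Nat.primeCounting y) :
    ∀ a b : ℕ, 2 ≤ a → 2 ≤ b →
      Nat.nth Nat.Prime (a + b - 1) > Nat.nth Nat.Prime (a - 1) + Nat.nth Nat.Prime (b - 1) := by
  intro a b ha hb
  obtain ⟨i, rfl⟩ : ∃ i, a = i + 1 := ⟨a - 1, by omega⟩
  obtain ⟨j, rfl⟩ : ∃ j, b = j + 1 := ⟨b - 1, by omega⟩
  rw [show i + 1 + (j + 1) - 1 = i + j + 1 by omega, Nat.add_sub_cancel, Nat.add_sub_cancel]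
  refine lt_of_le_of_ne (nth_prime_add_le_of_primeCounting_subadditive h i (by omega)) fun heq ↦ ?_
  exact not_prime_add_of_ne_two (prime_nth_prime i) (prime_nth_prime j)
    (nth_prime_ne_two (by omega)) (nth_prime_ne_two (by omega)) (heq ▸ prime_nth_prime _)

theorem stmt8
    (h : ∀ x y : ℕ, 2 ≤ x → 2 ≤ y →
      Nat.primeCounting (x + y) ≤ Nat.primeCounting x + Nat.primeCounting y)
    (h2 : ∀ p x : ℕ, p.Prime → 2 ≤ x → x ≤ p - 2 →
      Nat.primeCounting (p - 1) ≠ Nat.primeCounting x + Nat.primeCounting (p - x)) :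
    ∀ a b : ℕ, 2 ≤ a → 2 ≤ b →
      Nat.nth Nat.Prime (a + b - 1) > Nat.nth Nat.Prime (a - 1) + Nat.nth Nat.Prime (b - 1) :=
  stmt8_general h
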